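/- arXiv:2506.20089 — 3 statements merged into one kernel-verified Lean document; each statement's English description precedes it below -/
import Mathlib

section
/- Let D > 0, s ∈ (0,2), q > 2, and c₀, c₁ ≥ 1. Let m : (0,D) → ℝ be continuous and satisfy m(t) = -c₀/t + A₀(t) with A₀(t) → 0 as t → 0⁺, and m(t) = c₁/(D-t) + A₁(t) with A₁(t) → 0 as t → D⁻. Let k : [0,D] → ℝ be continuous, and set d(t) = min(t, D-t). If φ : [0,D] → ℝ is continuous on [0,D], twice continuously differentiable on (0,D), nonnegative, and satisfies φ''(t) - m(t)·φ'(t) - k(t)·φ(t) + φ(t)^{q-1}/d(t)^s = 0 for all t ∈ (0,D), then either φ is identically zero on [0,D] or φ(t) > 0 for every t ∈ [0,D]. -/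
/-!
Writing `φ ^ (q - 1) = φ ^ (q - 2) * φ` turns the equation into a linear one,
`φ'' = m φ' + c φ`, where `c = k - φ ^ (q - 2) / d ^ s` is continuous on `(0, D)` and bounded
above. If `φ` vanishes at an interior point it has a minimum there, so `φ' = 0` as well, and
uniqueness for linear equations (Grönwall's inequality for `(φ, φ')`) gives `φ ≡ 0`.

At the endpoint `0` the drift `m ~ -c₀ / t` is singular and uniqueness is not available.
Instead, the integrating factor `μ = exp (-∫ m)` vanishes like `t ^ c₀`, and since `c₀ ≥ 1`
it satisfies `μ τ ≲ (τ / t) μ t` for `τ ≤ t`. From `(μ φ')' ≤ C μ φ` and `φ 0 = 0` one gets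
`φ' t ≲ C M t`, with `M` the maximum of `φ` on a short interval `[0, b]`, hence `φ ≤ M / 2`
there; so `φ` vanishes on `[0, b]`, producing an interior zero. The endpoint `D` is the mirror
image.
-/

open Set Filter Topology Real

theorem ContDiffOn.hasDerivAt_deriv_deriv {f : ℝ → ℝ} {s : Set ℝ} {x : ℝ}
    (hf : ContDiffOn ℝ 2 f s) (hs : IsOpen s) (hx : x ∈ s) :
    HasDerivAt f (deriv f x) x ∧ HasDerivAt (deriv f) (deriv (deriv f) x) x :=
  ⟨((hf.differentiableOn two_ne_zero).differentiableAt (hs.mem_nhds hx)).hasDerivAt,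
    (((hf.deriv_of_isOpen (m := 1) hs (by norm_num)).differentiableOn one_ne_zero).differentiableAt
      (hs.mem_nhds hx)).hasDerivAt⟩

theorem ContinuousOn.exists_hasDerivAt_Ioo {f : ℝ → ℝ} {a b : ℝ} (hf : ContinuousOn f (Ioo a b)) :
    ∃ F : ℝ → ℝ, ∀ t ∈ Ioo a b, HasDerivAt F (f t) t := by
  rcases (Ioo a b).eq_empty_or_nonempty with h | ⟨c, hc⟩
  · exact ⟨0, by simp [h]⟩
  refine ⟨fun t => ∫ x in c..t, f x, fun t ht => ?_⟩
  have hsub : uIcc c t ⊆ Ioo a b := ordConnected_Ioo.uIcc_subset hc ht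
  exact intervalIntegral.integral_hasDerivAt_right ((hf.mono hsub).intervalIntegrable)
    (hf.stronglyMeasurableAtFilter isOpen_Ioo t ht) (hf.continuousAt (isOpen_Ioo.mem_nhds ht))

theorem eqOn_zero_of_norm_deriv_le {E : Type*} [NormedAddCommGroup E] [NormedSpace ℝ E]
    {f f' : ℝ → E} {K a b t₀ : ℝ} (hf : ∀ t ∈ Icc a b, HasDerivAt f (f' t) t)
    (bound : ∀ t ∈ Icc a b, ‖f' t‖ ≤ K * ‖f t‖) (ht₀ : t₀ ∈ Icc a b) (h0 : f t₀ = 0) :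
    EqOn f 0 (Icc a b) := by
  intro t ht
  rcases le_total t₀ t with h | h
  · have hsub : Icc t₀ b ⊆ Icc a b := Icc_subset_Icc_left ht₀.1
    exact eq_zero_of_abs_deriv_le_mul_abs_self_of_eq_zero_right
      (fun x hx => (hf x (hsub hx)).continuousAt.continuousWithinAt)
      (fun x hx => (hf x (hsub (Ico_subset_Icc_self hx))).hasDerivWithinAt) h0
      (fun x hx => bound x (hsub (Ico_subset_Icc_self hx))) t ⟨h, ht.2⟩
  · -- Grönwall only propagates forward in time, so reverse time
    have hsub : ∀ x ∈ Icc (-t₀) (-a), -x ∈ Icc a b := fun x hx =>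
      ⟨by linarith [hx.2], by linarith [hx.1, ht₀.2]⟩
    have hrefl : ∀ x ∈ Icc (-t₀) (-a), HasDerivAt (fun x => f (-x)) (-f' (-x)) x := fun x hx => by
      simpa [Function.comp_def] using (hf (-x) (hsub x hx)).scomp x (hasDerivAt_neg x)
    simpa using eq_zero_of_abs_deriv_le_mul_abs_self_of_eq_zero_right
      (fun x hx => (hrefl x hx).continuousAt.continuousWithinAt)
      (fun x hx => (hrefl x (Ico_subset_Icc_self hx)).hasDerivWithinAt) (by simpa using h0)
      (fun x hx => by simpa using bound (-x) (hsub x (Ico_subset_Icc_self hx)))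
      (-t) ⟨neg_le_neg h, neg_le_neg ht.1⟩

theorem eqOn_zero_of_linear_ode_Icc {p c φ φ' φ'' : ℝ → ℝ} {a b τ : ℝ}
    (hp : ContinuousOn p (Icc a b)) (hc : ContinuousOn c (Icc a b))
    (hφ : ∀ t ∈ Icc a b, HasDerivAt φ (φ' t) t) (hφ' : ∀ t ∈ Icc a b, HasDerivAt φ' (φ'' t) t)
    (hode : ∀ t ∈ Icc a b, φ'' t = p t * φ' t + c t * φ t)
    (hτ : τ ∈ Icc a b) (h0 : φ τ = 0) (h0' : φ' τ = 0) : EqOn φ 0 (Icc a b) := by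
  obtain ⟨Kp, hKp⟩ := isCompact_Icc.exists_bound_of_continuousOn hp
  obtain ⟨Kc, hKc⟩ := isCompact_Icc.exists_bound_of_continuousOn hc
  have hzero := eqOn_zero_of_norm_deriv_le (f := fun t => (φ t, φ' t)) (K := 1 + Kp + Kc)
    (fun t ht => (hφ t ht).prodMk (hφ' t ht)) (fun t ht => ?_) hτ (by simp [h0, h0'])
  · exact fun t ht => congrArg Prod.fst (hzero ht)
  have hKp0 : 0 ≤ Kp := (norm_nonneg _).trans (hKp t ht)
  have hKc0 : 0 ≤ Kc := (norm_nonneg _).trans (hKc t ht)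
  have h1 : ‖φ t‖ ≤ ‖(φ t, φ' t)‖ := norm_fst_le (φ t, φ' t)
  have h2 : ‖φ' t‖ ≤ ‖(φ t, φ' t)‖ := norm_snd_le (φ t, φ' t)
  have h3 : ‖φ'' t‖ ≤ Kp * ‖φ' t‖ + Kc * ‖φ t‖ := by
    rw [hode t ht]
    refine (norm_add_le _ _).trans (add_le_add ?_ ?_) <;> rw [norm_mul] <;> gcongr
    exacts [hKp t ht, hKc t ht]
  rw [Prod.norm_def]
  refine max_le ?_ ?_ <;> nlinarith [norm_nonneg (φ t, φ' t)]

theorem eqOn_zero_of_linear_ode {p c φ φ' φ'' : ℝ → ℝ} {a b τ : ℝ}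
    (hp : ContinuousOn p (Ioo a b)) (hc : ContinuousOn c (Ioo a b))
    (hφc : ContinuousOn φ (Icc a b))
    (hφ : ∀ t ∈ Ioo a b, HasDerivAt φ (φ' t) t) (hφ' : ∀ t ∈ Ioo a b, HasDerivAt φ' (φ'' t) t)
    (hode : ∀ t ∈ Ioo a b, φ'' t = p t * φ' t + c t * φ t)
    (hτ : τ ∈ Ioo a b) (h0 : φ τ = 0) (h0' : φ' τ = 0) : EqOn φ 0 (Icc a b) := by
  have hIoo : EqOn φ 0 (Ioo a b) := fun t ht => by
    have hsub : Icc (min τ t) (max τ t) ⊆ Ioo a b := ordConnected_Ioo.uIcc_subset hτ ht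
    exact eqOn_zero_of_linear_ode_Icc (hp.mono hsub) (hc.mono hsub) (fun x hx => hφ x (hsub hx))
      (fun x hx => hφ' x (hsub hx)) (fun x hx => hode x (hsub hx))
      ⟨min_le_left _ _, le_max_left _ _⟩ h0 h0' ⟨min_le_right _ _, le_max_right _ _⟩
  exact hIoo.of_subset_closure hφc continuousOn_const Ioo_subset_Icc_self
    (by rw [closure_Ioo (hτ.1.trans hτ.2).ne])

theorem integratingFactor_le {m μ : ℝ → ℝ} {b τ t : ℝ}
    (hμ : ∀ x ∈ Ioc 0 b, HasDerivAt μ (-m x * μ x) x) (hμpos : ∀ x ∈ Ioc 0 b, 0 < μ x)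
    (hm : ∀ x ∈ Ioc 0 b, m x ≤ 1 - 1 / x) (hτ : 0 < τ) (hτt : τ ≤ t) (htb : t ≤ b) :
    μ τ ≤ exp b * (τ / t) * μ t := by
  have hderiv : ∀ x ∈ Ioc 0 b, HasDerivAt (fun x => μ x * exp x / x)
      (μ x * exp x / x * (1 - 1 / x - m x)) x := fun x hx => by
    refine (((hμ x hx).fun_mul (hasDerivAt_exp x)).fun_div (hasDerivAt_id' x)
      hx.1.ne').congr_deriv ?_
    have := hx.1.ne'
    field_simp
    ring
  have hmono : MonotoneOn (fun x => μ x * exp x / x) (Ioc 0 b) := by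
    refine monotoneOn_of_hasDerivWithinAt_nonneg (convex_Ioc 0 b)
      (fun x hx => (hderiv x hx).continuousAt.continuousWithinAt)
      (fun x hx => (hderiv x (interior_subset hx)).hasDerivWithinAt) (fun x hx => ?_)
    replace hx := interior_subset hx
    have := hμpos x hx
    have := hx.1
    exact mul_nonneg (by positivity) (by linarith [hm x hx])
  have ht : 0 < t := hτ.trans_le hτt
  have hle := hmono ⟨hτ, hτt.trans htb⟩ ⟨ht, htb⟩ hτt
  simp only at hle
  have hμτ := hμpos τ ⟨hτ, hτt.trans htb⟩
  calc μ τ ≤ μ τ * exp τ := le_mul_of_one_le_right hμτ.le (one_le_exp hτ.le)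
    _ = τ * (μ τ * exp τ / τ) := by field_simp
    _ ≤ τ * (μ t * exp t / t) := mul_le_mul_of_nonneg_left hle hτ.le
    _ = (τ / t) * μ t * exp t := by ring
    _ ≤ (τ / t) * μ t * exp b := by
      have := hμpos t ⟨ht, htb⟩
      gcongr
    _ = exp b * (τ / t) * μ t := by ring

theorem integratingFactor_mul_sub_le {m μ φ φ' φ'' : ℝ → ℝ} {b C M ξ t : ℝ} (hC : 0 ≤ C)
    (hμ : ∀ x ∈ Ioc 0 b, HasDerivAt μ (-m x * μ x) x) (hμpos : ∀ x ∈ Ioc 0 b, 0 < μ x)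
    (hm : ∀ x ∈ Ioc 0 b, m x ≤ 1 - 1 / x) (hφM : ∀ x ∈ Ioc 0 b, 0 ≤ φ x ∧ φ x ≤ M)
    (hφ' : ∀ x ∈ Ioc 0 b, HasDerivAt φ' (φ'' x) x)
    (hode : ∀ x ∈ Ioc 0 b, φ'' x ≤ m x * φ' x + C * φ x)
    (hξ : 0 < ξ) (hξt : ξ ≤ t) (htb : t ≤ b) :
    μ t * φ' t - μ ξ * φ' ξ ≤ exp b * μ t * C * M * (t - ξ) := by
  have hsub : Icc ξ t ⊆ Ioc 0 b := fun x hx => ⟨hξ.trans_le hx.1, hx.2.trans htb⟩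
  have hd : ∀ x ∈ Icc ξ t, HasDerivAt (fun x => μ x * φ' x) (μ x * (φ'' x - m x * φ' x)) x :=
    fun x hx => ((hμ x (hsub hx)).fun_mul (hφ' x (hsub hx))).congr_deriv (by ring)
  refine (convex_Icc ξ t).image_sub_le_mul_sub_of_deriv_le
    (fun x hx => (hd x hx).continuousAt.continuousWithinAt)
    (fun x hx => (hd x (interior_subset hx)).differentiableAt.differentiableWithinAt)
    (fun x hx => ?_) ξ (left_mem_Icc.2 hξt) t (right_mem_Icc.2 hξt) hξt
  replace hx := interior_subset hx
  rw [(hd x hx).deriv]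
  have ht : 0 < t := hξ.trans_le hξt
  have hφx := hφM x (hsub hx)
  have hμt := hμpos t ⟨ht, htb⟩
  have hμle : μ x ≤ exp b * μ t := by
    have : x / t ≤ 1 := (div_le_one ht).2 hx.2
    calc μ x ≤ exp b * (x / t) * μ t := integratingFactor_le hμ hμpos hm (hsub hx).1 hx.2 htb
      _ ≤ exp b * 1 * μ t := by gcongr
      _ = exp b * μ t := by ring
  calc μ x * (φ'' x - m x * φ' x) ≤ μ x * (C * φ x) := by
        have := hμpos x (hsub hx)
        gcongr
        linarith [hode x (hsub hx)]
    _ ≤ exp b * μ t * (C * M) :=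
      mul_le_mul hμle (by gcongr; exact hφx.2) (mul_nonneg hC hφx.1) (by positivity)
    _ = exp b * μ t * C * M := by ring

theorem deriv_le_of_ode_le {m μ φ φ' φ'' : ℝ → ℝ} {b C M t : ℝ} (hC : 0 ≤ C)
    (hμ : ∀ x ∈ Ioc 0 b, HasDerivAt μ (-m x * μ x) x) (hμpos : ∀ x ∈ Ioc 0 b, 0 < μ x)
    (hm : ∀ x ∈ Ioc 0 b, m x ≤ 1 - 1 / x)
    (hφc : ContinuousOn φ (Icc 0 b)) (hφ0 : φ 0 = 0) (hφM : ∀ x ∈ Icc 0 b, 0 ≤ φ x ∧ φ x ≤ M)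
    (hφ : ∀ x ∈ Ioc 0 b, HasDerivAt φ (φ' x) x) (hφ' : ∀ x ∈ Ioc 0 b, HasDerivAt φ' (φ'' x) x)
    (hode : ∀ x ∈ Ioc 0 b, φ'' x ≤ m x * φ' x + C * φ x) (ht : t ∈ Ioc 0 b) :
    φ' t ≤ exp b * C * M * t := by
  have hM : 0 ≤ M := by
    obtain ⟨h₁, h₂⟩ := hφM 0 ⟨le_rfl, ht.1.le.trans ht.2⟩
    exact h₁.trans h₂
  -- mean value theorem: `φ' ξ = φ δ / δ` for some `ξ < δ`; the weight `μ ξ ≲ (ξ / t) μ t`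
  -- cancels the `1 / δ`
  have hbound : ∀ δ ∈ Ioo 0 t, φ' t ≤ exp b * φ δ / t + exp b * C * M * t := by
    intro δ hδ
    have hδb : δ ≤ b := hδ.2.le.trans ht.2
    obtain ⟨ξ, hξ, hslope⟩ := exists_hasDerivAt_eq_slope φ φ' hδ.1
      (hφc.mono (Icc_subset_Icc_right hδb)) (fun x hx => hφ x ⟨hx.1, hx.2.le.trans hδb⟩)
    rw [hφ0, sub_zero, sub_zero] at hslope
    have hξt : ξ ≤ t := (hξ.2.trans hδ.2).le
    have hφδ := hφM δ ⟨hδ.1.le, hδb⟩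
    have hμt := hμpos t ht
    have hstart : μ ξ * φ' ξ ≤ exp b * μ t * φ δ / t := by
      have hξδ : ξ / δ ≤ 1 := (div_le_one hδ.1).2 hξ.2.le
      calc μ ξ * φ' ξ ≤ exp b * (ξ / t) * μ t * (φ δ / δ) := by
            rw [hslope]
            exact mul_le_mul_of_nonneg_right (integratingFactor_le hμ hμpos hm hξ.1 hξt ht.2)
              (div_nonneg hφδ.1 hδ.1.le)
        _ = exp b * μ t * φ δ / t * (ξ / δ) := by ring
        _ ≤ exp b * μ t * φ δ / t := by
          have := ht.1
          have := hφδ.1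
          exact mul_le_of_le_one_right (by positivity) hξδ
    have hgrowth := integratingFactor_mul_sub_le hC hμ hμpos hm
      (fun x hx => hφM x (Ioc_subset_Icc_self hx)) hφ' hode hξ.1 hξt ht.2
    have : exp b * μ t * C * M * (t - ξ) ≤ exp b * μ t * C * M * t := by
      gcongr
      linarith [hξ.1]
    refine le_of_mul_le_mul_left ?_ hμt
    linarith [show μ t * (exp b * φ δ / t + exp b * C * M * t)
      = exp b * μ t * φ δ / t + exp b * μ t * C * M * t by ring]
  have hφlim : Tendsto φ (𝓝[>] 0) (𝓝 0) := by
    have := hφc 0 (left_mem_Icc.2 (ht.1.le.trans ht.2))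
    rw [ContinuousWithinAt, hφ0, nhdsWithin_Icc_eq_nhdsGE (ht.1.trans_le ht.2)] at this
    exact this.mono_left (nhdsWithin_mono 0 Ioi_subset_Ici_self)
  have hlim : Tendsto (fun δ => exp b * φ δ / t + exp b * C * M * t) (𝓝[>] 0)
      (𝓝 (exp b * 0 / t + exp b * C * M * t)) :=
    ((hφlim.const_mul _).div_const _).add_const _
  simpa using ge_of_tendsto hlim (eventually_of_mem (Ioo_mem_nhdsGT ht.1) hbound)

theorem exists_zero_Ioo_of_zero_left {m φ φ' φ'' : ℝ → ℝ} {D C : ℝ} (hD : 0 < D) (hC : 0 ≤ C)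
    (hm : ContinuousOn m (Ioo 0 D)) (hm0 : ∀ᶠ t in 𝓝[>] 0, m t ≤ 1 - 1 / t)
    (hφc : ContinuousOn φ (Icc 0 D)) (hφ0 : φ 0 = 0) (hφnn : ∀ t ∈ Icc 0 D, 0 ≤ φ t)
    (hφ : ∀ t ∈ Ioo 0 D, HasDerivAt φ (φ' t) t) (hφ' : ∀ t ∈ Ioo 0 D, HasDerivAt φ' (φ'' t) t)
    (hode : ∀ t ∈ Ioo 0 D, φ'' t ≤ m t * φ' t + C * φ t) :
    ∃ τ ∈ Ioo 0 D, φ τ = 0 := by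
  obtain ⟨F, hF⟩ := hm.exists_hasDerivAt_Ioo
  obtain ⟨a, ha, hma⟩ := mem_nhdsGT_iff_exists_Ioo_subset.1 hm0
  have hsmall : Tendsto (fun b => 2 * exp b * C * b ^ 2) (𝓝 0) (𝓝 0) :=
    (by fun_prop : Continuous _).tendsto' 0 0 (by simp)
  have hev : ∀ᶠ b in 𝓝[>] (0 : ℝ), (b < a ∧ b < D) ∧ 2 * exp b * C * b ^ 2 < 1 :=
    nhdsWithin_le_nhds (((eventually_lt_nhds ha).and (eventually_lt_nhds hD)).and
      (hsmall.eventually (gt_mem_nhds one_pos)))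
  obtain ⟨b, ⟨⟨hba, hbD⟩, hbC⟩, hb⟩ := (hev.and self_mem_nhdsWithin).exists
  have hsub : Ioc 0 b ⊆ Ioo 0 D := fun x hx => ⟨hx.1, hx.2.trans_lt hbD⟩
  have hsub' : Icc 0 b ⊆ Icc 0 D := Icc_subset_Icc_right hbD.le
  obtain ⟨t₁, ht₁, hmax⟩ := isCompact_Icc.exists_isMaxOn (nonempty_Icc.2 hb.le) (hφc.mono hsub')
  set M := φ t₁
  have hM : 0 ≤ M := hφnn t₁ (hsub' ht₁)
  have hφ'M : ∀ x ∈ Ioc 0 b, φ' x ≤ exp b * C * M * b := fun x hx => by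
    refine (deriv_le_of_ode_le (μ := fun t => exp (-F t)) hC
      (fun x hx => ((hF x (hsub hx)).fun_neg.exp).congr_deriv (by ring)) (fun x _ => exp_pos _)
      (fun x hx => hma ⟨hx.1, hx.2.trans_lt hba⟩) (hφc.mono hsub') hφ0
      (fun x hx => ⟨hφnn x (hsub' hx), hmax hx⟩) (fun x hx => hφ x (hsub hx))
      (fun x hx => hφ' x (hsub hx)) (fun x hx => hode x (hsub hx)) hx).trans ?_
    gcongr
    exact hx.2
  have hrise : M - φ 0 ≤ exp b * C * M * b * (t₁ - 0) :=
    (convex_Icc 0 b).image_sub_le_mul_sub_of_deriv_le (hφc.mono hsub')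
      (fun x hx => by
        rw [interior_Icc] at hx
        exact (hφ x (hsub (Ioo_subset_Ioc_self hx))).differentiableAt.differentiableWithinAt)
      (fun x hx => by
        rw [interior_Icc] at hx
        rw [(hφ x (hsub (Ioo_subset_Ioc_self hx))).deriv]
        exact hφ'M x (Ioo_subset_Ioc_self hx))
      0 (left_mem_Icc.2 hb.le) t₁ ht₁ ht₁.1
  have hM0 : M ≤ 0 := by
    rw [hφ0, sub_zero, sub_zero] at hrise
    have : exp b * C * M * b * t₁ ≤ exp b * C * M * b * b := by
      gcongr
      exact ht₁.2
    nlinarith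
  exact ⟨b, ⟨hb, hbD⟩, le_antisymm ((hmax ⟨hb.le, le_rfl⟩).trans hM0)
    (hφnn b (hsub' ⟨hb.le, le_rfl⟩))⟩

theorem exists_zero_Ioo_of_zero_right {m φ φ' φ'' : ℝ → ℝ} {D C : ℝ} (hD : 0 < D) (hC : 0 ≤ C)
    (hm : ContinuousOn m (Ioo 0 D)) (hmD : ∀ᶠ t in 𝓝[<] D, 1 / (D - t) - 1 ≤ m t)
    (hφc : ContinuousOn φ (Icc 0 D)) (hφD : φ D = 0) (hφnn : ∀ t ∈ Icc 0 D, 0 ≤ φ t)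
    (hφ : ∀ t ∈ Ioo 0 D, HasDerivAt φ (φ' t) t) (hφ' : ∀ t ∈ Ioo 0 D, HasDerivAt φ' (φ'' t) t)
    (hode : ∀ t ∈ Ioo 0 D, φ'' t ≤ m t * φ' t + C * φ t) :
    ∃ τ ∈ Ioo 0 D, φ τ = 0 := by
  have hIoo : MapsTo (D - ·) (Ioo 0 D) (Ioo 0 D) := fun u hu =>
    ⟨by linarith [hu.2], by linarith [hu.1]⟩
  have hIcc : MapsTo (D - ·) (Icc 0 D) (Icc 0 D) := fun u hu =>
    ⟨by linarith [hu.2], by linarith [hu.1]⟩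
  have hrefl : Tendsto (D - ·) (𝓝[>] 0) (𝓝[<] D) :=
    tendsto_nhdsWithin_iff.2 ⟨((by fun_prop : Continuous (D - ·)).tendsto' 0 D (by simp)).mono_left
      nhdsWithin_le_nhds, eventually_nhdsWithin_of_forall fun u (hu : 0 < u) => by simpa using hu⟩
  have hderiv : ∀ {f f' : ℝ → ℝ} {u}, HasDerivAt f (f' (D - u)) (D - u) →
      HasDerivAt (fun u => f (D - u)) (-f' (D - u)) u := fun hf => by
    simpa [Function.comp_def] using hf.scomp _ ((hasDerivAt_id _).const_sub D)
  obtain ⟨τ, hτ, hτ0⟩ := exists_zero_Ioo_of_zero_left (m := fun u => -m (D - u))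
    (φ := fun u => φ (D - u))
    (φ' := fun u => -φ' (D - u)) (φ'' := fun u => φ'' (D - u)) hD hC
    (hm.comp (by fun_prop) hIoo).neg
    ((hrefl.eventually hmD).mono fun u hu => by simp only [sub_sub_cancel] at hu; linarith)
    (hφc.comp (by fun_prop) hIcc) (by simpa using hφD) (fun u hu => hφnn _ (hIcc hu))
    (fun u hu => hderiv (hφ _ (hIoo hu)))
    (fun u hu => by simpa using (hderiv (hφ' _ (hIoo hu))).fun_neg)
    (fun u hu => by linarith [hode _ (hIoo hu)])
  exact ⟨D - τ, hIoo hτ, hτ0⟩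

theorem eventually_le_one_sub_inv {m A₀ : ℝ → ℝ} {D c₀ : ℝ} (hD : 0 < D) (hc₀ : 1 ≤ c₀)
    (hm₀ : ∀ t ∈ Ioo 0 D, m t = -c₀ / t + A₀ t) (hA₀ : Tendsto A₀ (𝓝[>] 0) (𝓝 0)) :
    ∀ᶠ t in 𝓝[>] 0, m t ≤ 1 - 1 / t := by
  filter_upwards [hA₀.eventually (gt_mem_nhds one_pos), Ioo_mem_nhdsGT hD] with t hA ht
  have : 1 / t ≤ c₀ / t := div_le_div_of_nonneg_right hc₀ ht.1.le
  linarith [hm₀ t ht, neg_div t c₀]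

theorem eventually_inv_sub_one_le {m A₁ : ℝ → ℝ} {D c₁ : ℝ} (hD : 0 < D) (hc₁ : 1 ≤ c₁)
    (hm₁ : ∀ t ∈ Ioo 0 D, m t = c₁ / (D - t) + A₁ t) (hA₁ : Tendsto A₁ (𝓝[<] D) (𝓝 0)) :
    ∀ᶠ t in 𝓝[<] D, 1 / (D - t) - 1 ≤ m t := by
  filter_upwards [hA₁.eventually (lt_mem_nhds (neg_lt_zero.2 one_pos)), Ioo_mem_nhdsLT hD]
    with t hA ht
  have : 1 / (D - t) ≤ c₁ / (D - t) := div_le_div_of_nonneg_right hc₁ (sub_pos.2 ht.2).le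
  linarith [hm₁ t ht]

theorem eqOn_zero_or_pos_of_linear_ode {m c φ φ' φ'' : ℝ → ℝ} {D C : ℝ} (hD : 0 < D)
    (hm : ContinuousOn m (Ioo 0 D)) (hm0 : ∀ᶠ t in 𝓝[>] 0, m t ≤ 1 - 1 / t)
    (hmD : ∀ᶠ t in 𝓝[<] D, 1 / (D - t) - 1 ≤ m t)
    (hc : ContinuousOn c (Ioo 0 D)) (hcC : ∀ t ∈ Ioo 0 D, c t ≤ C)
    (hφc : ContinuousOn φ (Icc 0 D)) (hφnn : ∀ t ∈ Icc 0 D, 0 ≤ φ t)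
    (hφ : ∀ t ∈ Ioo 0 D, HasDerivAt φ (φ' t) t) (hφ' : ∀ t ∈ Ioo 0 D, HasDerivAt φ' (φ'' t) t)
    (hode : ∀ t ∈ Ioo 0 D, φ'' t = m t * φ' t + c t * φ t) :
    (∀ t ∈ Icc 0 D, φ t = 0) ∨ (∀ t ∈ Icc 0 D, 0 < φ t) := by
  have hineq : ∀ t ∈ Ioo 0 D, φ'' t ≤ m t * φ' t + max C 0 * φ t := fun t ht => by
    rw [hode t ht]
    gcongr
    · exact hφnn t (Ioo_subset_Icc_self ht)
    · exact (hcC t ht).trans (le_max_left _ _)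
  refine or_iff_not_imp_right.2 fun hpos => ?_
  obtain ⟨z, hz, hz0⟩ : ∃ z ∈ Icc 0 D, φ z = 0 := by
    simp only [not_forall, not_lt] at hpos
    obtain ⟨z, hz, hz0⟩ := hpos
    exact ⟨z, hz, le_antisymm hz0 (hφnn z hz)⟩
  obtain ⟨τ, hτ, hτ0⟩ : ∃ τ ∈ Ioo 0 D, φ τ = 0 := by
    rcases hz.1.eq_or_lt with rfl | hz₁
    · exact exists_zero_Ioo_of_zero_left hD (le_max_right C 0) hm hm0 hφc hz0 hφnn hφ hφ' hineq
    rcases hz.2.eq_or_lt with hzD | hz₂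
    · exact exists_zero_Ioo_of_zero_right hD (le_max_right C 0) hm hmD hφc (hzD ▸ hz0) hφnn hφ
        hφ' hineq
    exact ⟨z, ⟨hz₁, hz₂⟩, hz0⟩
  have hmin : IsLocalMin φ τ :=
    eventually_of_mem (Icc_mem_nhds hτ.1 hτ.2) fun t ht => hτ0 ▸ hφnn t ht
  exact fun t ht => eqOn_zero_of_linear_ode hm hc hφc hφ hφ' hode hτ hτ0
    (hmin.hasDerivAt_eq_zero (hφ τ hτ)) ht

theorem stmt_0_general (D s q c₀ c₁ : ℝ) (hD : 0 < D)
    (hq : 2 < q) (hc₀ : 1 ≤ c₀) (hc₁ : 1 ≤ c₁)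
    (m : ℝ → ℝ) (hm : ContinuousOn m (Ioo 0 D))
    (A₀ A₁ : ℝ → ℝ)
    (hm₀ : ∀ t ∈ Ioo 0 D, m t = -c₀ / t + A₀ t)
    (hA₀ : Tendsto A₀ (nhdsWithin 0 (Ioi 0)) (nhds 0))
    (hm₁ : ∀ t ∈ Ioo 0 D, m t = c₁ / (D - t) + A₁ t)
    (hA₁ : Tendsto A₁ (nhdsWithin D (Iio D)) (nhds 0))
    (k : ℝ → ℝ) (hk : ContinuousOn k (Icc 0 D))
    (d : ℝ → ℝ) (hd : ∀ t, d t = min t (D - t))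
    (φ : ℝ → ℝ)
    (hφcont : ContinuousOn φ (Icc 0 D))
    (hφC2 : ContDiffOn ℝ 2 φ (Ioo 0 D))
    (hφnonneg : ∀ t ∈ Icc 0 D, 0 ≤ φ t)
    (hODE : ∀ t ∈ Ioo 0 D,
      deriv (deriv φ) t - m t * deriv φ t - k t * φ t + φ t ^ (q - 1) / d t ^ s = 0) :
    (∀ t ∈ Icc 0 D, φ t = 0) ∨ (∀ t ∈ Icc 0 D, 0 < φ t) := by
  have hd0 : ∀ t ∈ Ioo 0 D, 0 < d t := fun t ht => (hd t).symm ▸ lt_min ht.1 (sub_pos.2 ht.2)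
  have hφ0 : ∀ t ∈ Ioo 0 D, 0 ≤ φ t := fun t ht => hφnonneg t (Ioo_subset_Icc_self ht)
  obtain ⟨C, hC⟩ := isCompact_Icc.exists_bound_of_continuousOn hk
  refine eqOn_zero_or_pos_of_linear_ode (c := fun t => k t - φ t ^ (q - 2) / d t ^ s) (C := C) hD
    hm (eventually_le_one_sub_inv hD hc₀ hm₀ hA₀) (eventually_inv_sub_one_le hD hc₁ hm₁ hA₁)
    ?_ (fun t ht => ?_) hφcont hφnonneg (fun t ht => (hφC2.hasDerivAt_deriv_deriv isOpen_Ioo ht).1)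
    (fun t ht => (hφC2.hasDerivAt_deriv_deriv isOpen_Ioo ht).2) (fun t ht => ?_)
  · have hdc : ContinuousOn d (Ioo 0 D) := by
      rw [funext hd]
      fun_prop
    exact (hk.mono Ioo_subset_Icc_self).sub <|
      ((hφcont.mono Ioo_subset_Icc_self).rpow_const fun _ _ => Or.inr (by linarith)).div
        (hdc.rpow_const fun t ht => Or.inl (hd0 t ht).ne')
        fun t ht => (rpow_pos_of_pos (hd0 t ht) s).ne'
  · have := hd0 t ht
    have := hφ0 t ht
    have : 0 ≤ φ t ^ (q - 2) / d t ^ s := by positivity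
    linarith [le_of_abs_le (hC t (Ioo_subset_Icc_self ht))]
  · have hpow : φ t ^ (q - 1) = φ t ^ (q - 2) * φ t := by
      rw [← rpow_add_one' (hφ0 t ht) (by linarith)]
      ring_nf
    linear_combination (hODE t ht) - hpow / d t ^ s

/-- ODE form of Theorem 1.1: a nonnegative solution of the Hardy–Sobolev ODE
is either identically zero or everywhere positive. -/
theorem stmt_0 (D s q c₀ c₁ : ℝ) (hD : 0 < D) (hs0 : 0 < s) (hs2 : s < 2)
    (hq : 2 < q) (hc₀ : 1 ≤ c₀) (hc₁ : 1 ≤ c₁)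
    (m : ℝ → ℝ) (hm : ContinuousOn m (Ioo 0 D))
    (A₀ A₁ : ℝ → ℝ)
    (hm₀ : ∀ t ∈ Ioo 0 D, m t = -c₀ / t + A₀ t)
    (hA₀ : Tendsto A₀ (nhdsWithin 0 (Ioi 0)) (nhds 0))
    (hm₁ : ∀ t ∈ Ioo 0 D, m t = c₁ / (D - t) + A₁ t)
    (hA₁ : Tendsto A₁ (nhdsWithin D (Iio D)) (nhds 0))
    (k : ℝ → ℝ) (hk : ContinuousOn k (Icc 0 D))
    (d : ℝ → ℝ) (hd : ∀ t, d t = min t (D - t))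
    (φ : ℝ → ℝ)
    (hφcont : ContinuousOn φ (Icc 0 D))
    (hφC2 : ContDiffOn ℝ 2 φ (Ioo 0 D))
    (hφnonneg : ∀ t ∈ Icc 0 D, 0 ≤ φ t)
    (hODE : ∀ t ∈ Ioo 0 D,
      deriv (deriv φ) t - m t * deriv φ t - k t * φ t + φ t ^ (q - 1) / d t ^ s = 0) :
    (∀ t ∈ Icc 0 D, φ t = 0) ∨ (∀ t ∈ Icc 0 D, 0 < φ t) :=
  stmt_0_general D s q c₀ c₁ hD hq hc₀ hc₁ m hm A₀ A₁ hm₀ hA₀ hm₁ hA₁ k hk d hd φ hφcont hφC2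
    hφnonneg hODE
end

section
/- Let T > 0 and c ≥ 1. Let m : (0,T] → ℝ be continuous with m(t) = -c/t + A(t) where A(t) → 0 as t → 0⁺, and let h : (0,T) → ℝ be continuous and bounded from below. If φ : [0,T] → ℝ is continuous on [0,T], twice continuously differentiable on (0,T), satisfies φ(t) > 0 for all t ∈ (0,T), and satisfies φ''(t) - m(t)·φ'(t) + h(t)·φ(t) = 0 for all t ∈ (0,T), then φ(0) > 0. -/
open Set Filter Topology Real

/-!
Multiplying the equation by the integrating factor `μ(t) = t ^ c * exp (-∫_ε^t A)`, which is
comparable to `t ^ c` near `0`, turns it into `(μ φ')' = -h μ φ ≤ β μ φ`. Suppose `φ 0 ≤ 0`.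
If `μ φ'` stayed above some `δ > 0` near `0`, then `φ' ≥ δ / μ ≳ δ / t` (as `c ≥ 1`), so `φ`
would go to `-∞` like `log t`, contradicting `φ > 0`. Comparing with `t ^ (c + 1)` therefore
gives `μ φ' ≲ β Q t ^ (c + 1)` with `Q = sup φ` on `(0, τ]`, hence `φ' ≲ β Q t` and, since
`φ 0 ≤ 0`, `φ ≲ β Q t ^ 2 ≤ Q / 2` on `(0, τ]` for small `τ`. So `Q ≤ Q / 2`, i.e. `Q ≤ 0`.
-/

lemma tendsto_atBot_of_div_le_deriv {f f' : ℝ → ℝ} {γ τ : ℝ} (hγ : 0 < γ) (hτ : 0 < τ)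
    (hf : ContinuousOn f (Ioc 0 τ)) (hf' : ∀ t ∈ Ioo 0 τ, HasDerivAt f (f' t) t)
    (hle : ∀ t ∈ Ioo 0 τ, γ / t ≤ f' t) : Tendsto f (𝓝[>] 0) atBot := by
  have hmono : MonotoneOn (fun t => f t - γ * log t) (Ioc 0 τ) := by
    refine monotoneOn_of_hasDerivWithinAt_nonneg (convex_Ioc 0 τ)
      (hf.sub (continuousOn_const.mul (continuousOn_log.mono fun t ht => ht.1.ne')))
      (fun t ht => ?_) (fun t ht => ?_) (f' := fun t => f' t - γ * t⁻¹)
    · rw [interior_Ioc] at ht ⊢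
      exact ((hf' t ht).sub ((hasDerivAt_log ht.1.ne').const_mul γ)).hasDerivWithinAt
    · rw [interior_Ioc] at ht
      simpa [div_eq_mul_inv] using hle t ht
  have hbound : ∀ᶠ t in 𝓝[>] 0, f t ≤ (f τ - γ * log τ) + γ * log t := by
    filter_upwards [Ioc_mem_nhdsGT hτ] with t ht
    linarith [hmono ht (right_mem_Ioc.2 hτ) ht.2]
  exact tendsto_atBot_mono' _ hbound
    (tendsto_atBot_add_const_left _ _ (tendsto_log_nhdsGT_zero.const_mul_atBot hγ))

lemma le_mul_sq_div_two_of_deriv_le {f f' : ℝ → ℝ} {τ K : ℝ} (hf : ContinuousOn f (Icc 0 τ))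
    (hf0 : f 0 ≤ 0) (hf' : ∀ t ∈ Ioo 0 τ, HasDerivAt f (f' t) t)
    (hle : ∀ t ∈ Ioo 0 τ, f' t ≤ K * t) : ∀ t ∈ Icc 0 τ, f t ≤ K * t ^ 2 / 2 := by
  have hmono : MonotoneOn (fun t => K * t ^ 2 / 2 - f t) (Icc 0 τ) := by
    refine monotoneOn_of_hasDerivWithinAt_nonneg (convex_Icc 0 τ) (by fun_prop)
      (fun t ht => ?_) (fun t ht => ?_) (f' := fun t => K * t - f' t)
    · rw [interior_Icc] at ht ⊢
      refine ((((hasDerivAt_pow 2 t).const_mul K).div_const 2).sub (hf' t ht)).hasDerivWithinAt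
        |>.congr_deriv ?_
      ring
    · rw [interior_Icc] at ht
      linarith [hle t ht]
  intro t ht
  have := hmono (left_mem_Icc.2 (ht.1.trans ht.2)) ht ht.1
  simp only at this
  linarith

lemma antitoneOn_sub_rpow_of_deriv_le {g g' : ℝ → ℝ} {c τ D : ℝ} (hc : c + 1 ≠ 0)
    (hg : ∀ t ∈ Ioc 0 τ, HasDerivAt g (g' t) t) (hg' : ∀ t ∈ Ioc 0 τ, g' t ≤ D * t ^ c) :
    AntitoneOn (fun t => g t - D * (t ^ (c + 1) / (c + 1))) (Ioc 0 τ) := by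
  refine antitoneOn_of_hasDerivWithinAt_nonpos (convex_Ioc 0 τ) (fun t ht => ?_)
    (fun t ht => ?_) (fun t ht => ?_) (f' := fun t => g' t - D * t ^ c)
  · exact (hg t ht).continuousAt.continuousWithinAt.sub
      (((continuousAt_id.rpow_const (Or.inl ht.1.ne')).div_const _).const_mul D).continuousWithinAt
  · rw [interior_Ioc] at ht ⊢
    have hpow : HasDerivAt (fun s : ℝ => s ^ (c + 1) / (c + 1)) (t ^ c) t := by
      refine ((hasDerivAt_rpow_const (Or.inl ht.1.ne')).div_const (c + 1)).congr_deriv ?_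
      rw [add_sub_cancel_right]
      field_simp
    exact ((hg t (Ioo_subset_Ioc_self ht)).sub (hpow.const_mul D)).hasDerivWithinAt
  · rw [interior_Ioc] at ht
    linarith [hg' t (Ioo_subset_Ioc_self ht)]

lemma mul_deriv_le_of_deriv_le {c τ b D : ℝ} {φ φ' μ g' : ℝ → ℝ} (hc : 0 < c + 1) (hD : 0 ≤ D)
    (hφpos : ∀ t ∈ Ioc 0 τ, 0 < φ t) (hφ' : ∀ t ∈ Ioc 0 τ, HasDerivAt φ (φ' t) t)
    (hμ : ∀ t ∈ Ioc 0 τ, 0 < μ t ∧ μ t ≤ b * t)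
    (hg : ∀ t ∈ Ioc 0 τ, HasDerivAt (fun s => μ s * φ' s) (g' t) t)
    (hg' : ∀ t ∈ Ioc 0 τ, g' t ≤ D * t ^ c) :
    ∀ t ∈ Ioc 0 τ, μ t * φ' t ≤ D * (t ^ (c + 1) / (c + 1)) := by
  intro t₀ ht₀
  by_contra! hlt
  have hsub : Ioc 0 t₀ ⊆ Ioc 0 τ := Ioc_subset_Ioc_right ht₀.2
  set δ := μ t₀ * φ' t₀ - D * (t₀ ^ (c + 1) / (c + 1))
  have hδ : 0 < δ := sub_pos.2 hlt
  have hb : 0 < b := pos_of_mul_pos_left ((hμ t₀ ht₀).1.trans_le (hμ t₀ ht₀).2) ht₀.1.le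
  have hlow : ∀ t ∈ Ioo 0 t₀, δ / b / t ≤ φ' t := by
    intro t ht
    obtain ⟨hμpos, hμle⟩ := hμ t (hsub (Ioo_subset_Ioc_self ht))
    have hδle : δ ≤ μ t * φ' t := by
      have hanti := (antitoneOn_sub_rpow_of_deriv_le hc.ne' hg hg').mono hsub
        (Ioo_subset_Ioc_self ht) (right_mem_Ioc.2 ht₀.1) ht.2.le
      have := rpow_nonneg ht.1.le (c + 1)
      have : 0 ≤ D * (t ^ (c + 1) / (c + 1)) := by positivity
      simp only at hanti
      linarith
    have hφ'pos : 0 < φ' t := pos_of_mul_pos_right (hδ.trans_le hδle) hμpos.le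
    rw [div_div, div_le_iff₀ (mul_pos hb ht.1)]
    nlinarith
  have hbot := tendsto_atBot_of_div_le_deriv (div_pos hδ hb) ht₀.1
    (fun t ht => (hφ' t (hsub ht)).continuousAt.continuousWithinAt)
    (fun t ht => hφ' t (hsub (Ioo_subset_Ioc_self ht))) hlow
  obtain ⟨t, hneg, ht⟩ := ((hbot.eventually_le_atBot 0).and (Ioc_mem_nhdsGT ht₀.1)).exists
  exact (hφpos t (hsub ht)).not_ge hneg

lemma le_div_mul_of_mul_le_rpow {a c D μ x t : ℝ} (ha : 0 < a) (hc : 0 ≤ c) (hD : 0 ≤ D)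
    (ht : 0 < t) (hμ : a * t ^ c ≤ μ) (h : μ * x ≤ D * (t ^ (c + 1) / (c + 1))) :
    x ≤ D / a * t := by
  have htc : 0 < t ^ c := rpow_pos_of_pos ht c
  have hup : μ * x ≤ D * t * t ^ c := by
    refine h.trans ?_
    rw [rpow_add_one ht.ne', mul_assoc D, mul_comm t]
    exact mul_le_mul_of_nonneg_left (div_le_self (by positivity) (by linarith)) hD
  rcases le_or_gt x 0 with hneg | hpos
  · exact hneg.trans (by positivity)
  have hlow : a * t ^ c * x ≤ μ * x := mul_le_mul_of_nonneg_right hμ hpos.le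
  rw [div_mul_eq_mul_div, le_div_iff₀ ha]
  nlinarith

lemma le_half_of_weighted_deriv_le {c τ a b β Q : ℝ} {φ φ' μ g' : ℝ → ℝ} (hc : 1 ≤ c)
    (hτ1 : τ ≤ 1) (ha : 0 < a) (hβ : 0 ≤ β) (hτβ : b * β * τ ^ 2 ≤ a)
    (hφ : ContinuousOn φ (Icc 0 τ)) (hφ0 : φ 0 ≤ 0) (hφpos : ∀ t ∈ Ioc 0 τ, 0 < φ t)
    (hQ : ∀ t ∈ Ioc 0 τ, φ t ≤ Q) (hφ' : ∀ t ∈ Ioc 0 τ, HasDerivAt φ (φ' t) t)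
    (hμ : ∀ t ∈ Ioc 0 τ, μ t ∈ Icc (a * t ^ c) (b * t ^ c))
    (hg : ∀ t ∈ Ioc 0 τ, HasDerivAt (fun s => μ s * φ' s) (g' t) t)
    (hg' : ∀ t ∈ Ioc 0 τ, g' t ≤ β * μ t * φ t) : ∀ t ∈ Ioc 0 τ, φ t ≤ Q / 2 := by
  intro t ht
  have hτ : 0 < τ := ht.1.trans_le ht.2
  have hQpos : 0 < Q := (hφpos τ (right_mem_Ioc.2 hτ)).trans_le (hQ τ (right_mem_Ioc.2 hτ))
  have hb : 0 < b := by
    have h := hμ τ (right_mem_Ioc.2 hτ)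
    exact ha.trans_le (le_of_mul_le_mul_right (h.1.trans h.2) (rpow_pos_of_pos hτ c))
  have hμ' : ∀ s ∈ Ioc 0 τ, 0 < μ s ∧ μ s ≤ b * s := by
    intro s hs
    have hsc : s ^ c ≤ s := by simpa using rpow_le_rpow_of_exponent_ge hs.1 (hs.2.trans hτ1) hc
    exact ⟨(mul_pos ha (rpow_pos_of_pos hs.1 c)).trans_le (hμ s hs).1,
      (hμ s hs).2.trans (mul_le_mul_of_nonneg_left hsc hb.le)⟩
  have hgle := mul_deriv_le_of_deriv_le (c := c) (D := b * β * Q) (by linarith) (by positivity)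
    hφpos hφ' hμ' hg fun s hs => calc
      g' s ≤ β * μ s * φ s := hg' s hs
      _ ≤ β * (b * s ^ c) * Q :=
        mul_le_mul (mul_le_mul_of_nonneg_left (hμ s hs).2 hβ) (hQ s hs) (hφpos s hs).le
          (mul_nonneg hβ (mul_nonneg hb.le (rpow_nonneg hs.1.le c)))
      _ = b * β * Q * s ^ c := by ring
  have hquad := le_mul_sq_div_two_of_deriv_le hφ hφ0 (fun s hs => hφ' s (Ioo_subset_Ioc_self hs))
    (fun s hs => le_div_mul_of_mul_le_rpow ha (by linarith) (by positivity) hs.1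
      (hμ s (Ioo_subset_Ioc_self hs)).1 (hgle s (Ioo_subset_Ioc_self hs))) t (Ioc_subset_Icc_self ht)
  have htβ : b * β * t ^ 2 ≤ a :=
    (mul_le_mul_of_nonneg_left (pow_le_pow_left₀ ht.1.le ht.2 2) (by positivity)).trans hτβ
  calc φ t ≤ b * β * Q / a * t ^ 2 / 2 := hquad
    _ = Q * (b * β * t ^ 2 / a) / 2 := by ring
    _ ≤ Q * 1 / 2 := by gcongr; exact (div_le_one ha).2 htβ
    _ = Q / 2 := by ring

theorem pos_at_zero_of_weighted_deriv_le {c ε a b β : ℝ} {φ φ' μ g' : ℝ → ℝ} (hc : 1 ≤ c)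
    (hε : 0 < ε) (ha : 0 < a) (hβ : 0 ≤ β) (hφ : ContinuousOn φ (Icc 0 ε))
    (hφpos : ∀ t ∈ Ioc 0 ε, 0 < φ t) (hφ' : ∀ t ∈ Ioc 0 ε, HasDerivAt φ (φ' t) t)
    (hμ : ∀ t ∈ Ioc 0 ε, μ t ∈ Icc (a * t ^ c) (b * t ^ c))
    (hg : ∀ t ∈ Ioc 0 ε, HasDerivAt (fun s => μ s * φ' s) (g' t) t)
    (hg' : ∀ t ∈ Ioc 0 ε, g' t ≤ β * μ t * φ t) : 0 < φ 0 := by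
  by_contra! hφ0
  obtain ⟨τ, hτ0, hτε, hτ1, hτβ⟩ : ∃ τ, 0 < τ ∧ τ ≤ ε ∧ τ ≤ 1 ∧ b * β * τ ^ 2 ≤ a := by
    have hsmall : ∀ᶠ τ in 𝓝 (0 : ℝ), b * β * τ ^ 2 < a :=
      (Continuous.tendsto' (by fun_prop) 0 0 (by simp)).eventually_lt_const ha
    obtain ⟨τ, hτ, hτa⟩ :=
      (Eventually.and (Ioc_mem_nhdsGT (lt_min hε one_pos)) (nhdsWithin_le_nhds hsmall)).exists
    exact ⟨τ, hτ.1, hτ.2.trans (min_le_left _ _), hτ.2.trans (min_le_right _ _), hτa.le⟩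
  have hsub : Ioc 0 τ ⊆ Ioc 0 ε := Ioc_subset_Ioc_right hτε
  have hφτ : ContinuousOn φ (Icc 0 τ) := hφ.mono (Icc_subset_Icc_right hτε)
  have hbdd : BddAbove (φ '' Ioc 0 τ) :=
    (isCompact_Icc.bddAbove_image hφτ).mono (image_mono Ioc_subset_Icc_self)
  set Q := sSup (φ '' Ioc 0 τ)
  have hQ : ∀ t ∈ Ioc 0 τ, φ t ≤ Q := fun t ht => le_csSup hbdd (mem_image_of_mem φ ht)
  have hhalf := le_half_of_weighted_deriv_le hc hτ1 ha hβ hτβ hφτ hφ0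
    (fun t ht => hφpos t (hsub ht)) hQ (fun t ht => hφ' t (hsub ht)) (fun t ht => hμ t (hsub ht))
    (fun t ht => hg t (hsub ht)) (fun t ht => hg' t (hsub ht))
  have hQhalf : Q ≤ Q / 2 := csSup_le ((nonempty_Ioc.2 hτ0).image φ) (forall_mem_image.2 hhalf)
  linarith [hφpos τ (hsub (right_mem_Ioc.2 hτ0)), hQ τ (right_mem_Ioc.2 hτ0)]

noncomputable def integratingFactor (c ε : ℝ) (A : ℝ → ℝ) (t : ℝ) : ℝ :=
  t ^ c * exp (-∫ s in ε..t, A s)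

lemma hasDerivAt_integratingFactor {c ε t : ℝ} {A : ℝ → ℝ} {U : Set ℝ} (hU : IsOpen U)
    (hA : ContinuousOn A U) (hεt : uIcc ε t ⊆ U) (ht : 0 < t) :
    HasDerivAt (integratingFactor c ε A) ((c / t - A t) * integratingFactor c ε A t) t := by
  have htU : t ∈ U := hεt right_mem_uIcc
  have hint : HasDerivAt (fun u => ∫ s in ε..u, A s) (A t) t :=
    intervalIntegral.integral_hasDerivAt_right ((hA.mono hεt).intervalIntegrable)
      (hA.stronglyMeasurableAtFilter hU t htU) (hA.continuousAt (hU.mem_nhds htU))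
  refine ((hasDerivAt_rpow_const (p := c) (Or.inl ht.ne')).mul hint.neg.exp).congr_deriv ?_
  rw [integratingFactor, rpow_sub_one ht.ne']
  simp only [Pi.neg_apply]
  field_simp
  ring

lemma integratingFactor_mem_Icc {c ε t M : ℝ} {A : ℝ → ℝ} (hA : ∀ s ∈ Ioc 0 ε, |A s| ≤ M)
    (ht : t ∈ Ioc 0 ε) :
    integratingFactor c ε A t ∈ Icc (exp (-(M * ε)) * t ^ c) (exp (M * ε) * t ^ c) := by
  have hM : 0 ≤ M := (abs_nonneg _).trans (hA ε ⟨ht.1.trans_le ht.2, le_rfl⟩)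
  have hint : |∫ s in ε..t, A s| ≤ M * ε := by
    have hsub : uIoc ε t ⊆ Ioc 0 ε := by
      rw [uIoc_of_ge ht.2]; exact Ioc_subset_Ioc_left ht.1.le
    calc |∫ s in ε..t, A s| = ‖∫ s in ε..t, A s‖ := (norm_eq_abs _).symm
      _ ≤ M * |t - ε| := intervalIntegral.norm_integral_le_of_norm_le_const fun s hs =>
          (norm_eq_abs _).trans_le (hA s (hsub hs))
      _ ≤ M * ε := by
          rw [abs_of_nonpos (by linarith [ht.2])]
          exact mul_le_mul_of_nonneg_left (by linarith [ht.1]) hM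
  have htc : 0 < t ^ c := rpow_pos_of_pos ht.1 c
  rw [abs_le] at hint
  rw [integratingFactor, mul_comm (t ^ c)]
  exact ⟨mul_le_mul_of_nonneg_right (exp_le_exp.2 (by linarith)) htc.le,
    mul_le_mul_of_nonneg_right (exp_le_exp.2 (by linarith)) htc.le⟩

lemma hasDerivAt_integratingFactor_mul {c ε t : ℝ} {A m h φ ψ : ℝ → ℝ} {ψ' : ℝ} {U : Set ℝ}
    (hU : IsOpen U) (hA : ContinuousOn A U) (hεt : uIcc ε t ⊆ U) (ht : 0 < t)
    (hψ : HasDerivAt ψ ψ' t) (hm : m t = -c / t + A t) (hODE : ψ' - m t * ψ t + h t * φ t = 0) :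
    HasDerivAt (fun s => integratingFactor c ε A s * ψ s)
      (-(h t * integratingFactor c ε A t * φ t)) t := by
  refine ((hasDerivAt_integratingFactor hU hA hεt ht).mul hψ).congr_deriv ?_
  rw [hm] at hODE
  linear_combination integratingFactor c ε A t * hODE

theorem stmt_1_general (T c : ℝ) (hT : 0 < T) (hc : 1 ≤ c)
    (m : ℝ → ℝ) (hm : ContinuousOn m (Ioc 0 T))
    (A : ℝ → ℝ)
    (hmA : ∀ t ∈ Ioc 0 T, m t = -c / t + A t)
    (hA : Tendsto A (nhdsWithin 0 (Ioi 0)) (nhds 0))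
    (h : ℝ → ℝ)
    (hhbd : ∃ B : ℝ, ∀ t ∈ Ioo 0 T, B ≤ h t)
    (φ : ℝ → ℝ)
    (hφcont : ContinuousOn φ (Icc 0 T))
    (hφC2 : ContDiffOn ℝ 2 φ (Ioo 0 T))
    (hφpos : ∀ t ∈ Ioo 0 T, 0 < φ t)
    (hODE : ∀ t ∈ Ioo 0 T,
      deriv (deriv φ) t - m t * deriv φ t + h t * φ t = 0) :
    0 < φ 0 := by
  obtain ⟨B, hB⟩ := hhbd
  have hAcont : ContinuousOn A (Ioo 0 T) := by
    refine ContinuousOn.congr (f := fun t => m t + c / t) ((hm.mono Ioo_subset_Ioc_self).add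
      (continuousOn_const.div continuousOn_id fun t ht => ht.1.ne')) fun t ht => ?_
    simp only [hmA t (Ioo_subset_Ioc_self ht)]
    ring
  obtain ⟨ε, hε, hAε⟩ : ∃ ε ∈ Ioi 0, Ioc 0 ε ⊆ {t | t < T ∧ |A t| ≤ 1} :=
    mem_nhdsGT_iff_exists_Ioc_subset.1 <| Eventually.and (nhdsWithin_le_nhds (eventually_lt_nhds hT))
      ((hA.abs.eventually_lt_const (by simp : |(0 : ℝ)| < 1)).mono fun _ ht => ht.le)
  have hsub : Ioc 0 ε ⊆ Ioo 0 T := fun t ht => ⟨ht.1, (hAε ht).1⟩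
  have hφ' : ∀ t ∈ Ioo 0 T, HasDerivAt φ (deriv φ t) t := fun t ht =>
    ((hφC2.differentiableOn two_ne_zero).differentiableAt (isOpen_Ioo.mem_nhds ht)).hasDerivAt
  have hφ'' : ∀ t ∈ Ioo 0 T, HasDerivAt (deriv φ) (deriv (deriv φ) t) t := fun t ht =>
    (((hφC2.deriv_of_isOpen isOpen_Ioo le_rfl).differentiableOn one_ne_zero).differentiableAt
      (isOpen_Ioo.mem_nhds ht)).hasDerivAt
  refine pos_at_zero_of_weighted_deriv_le (β := max (-B) 0) hc hε (exp_pos _) (le_max_right _ _)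
    (hφcont.mono (Icc_subset_Icc_right (hsub (right_mem_Ioc.2 hε)).2.le))
    (fun t ht => hφpos t (hsub ht)) (fun t ht => hφ' t (hsub ht))
    (fun t ht => integratingFactor_mem_Icc (fun s hs => (hAε hs).2) ht)
    (fun t ht => hasDerivAt_integratingFactor_mul isOpen_Ioo hAcont
      (ordConnected_Ioo.uIcc_subset (hsub (right_mem_Ioc.2 hε)) (hsub ht)) ht.1 (hφ'' t (hsub ht))
      (hmA t (Ioo_subset_Ioc_self (hsub ht))) (hODE t (hsub ht))) fun t ht => ?_
  have hμφ : 0 ≤ integratingFactor c ε A t * φ t :=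
    mul_nonneg (mul_nonneg (rpow_nonneg ht.1.le c) (exp_pos _).le) (hφpos t (hsub ht)).le
  nlinarith [le_max_left (-B) 0, hB t (hsub ht)]

/-- Key step in the proof of Theorem 1.1: a positive solution of the linear ODE
with singular drift `m(t) = -c/t + A(t)` cannot vanish at the focal endpoint. -/
theorem stmt_1 (T c : ℝ) (hT : 0 < T) (hc : 1 ≤ c)
    (m : ℝ → ℝ) (hm : ContinuousOn m (Ioc 0 T))
    (A : ℝ → ℝ)
    (hmA : ∀ t ∈ Ioc 0 T, m t = -c / t + A t)
    (hA : Tendsto A (nhdsWithin 0 (Ioi 0)) (nhds 0))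
    (h : ℝ → ℝ) (hhcont : ContinuousOn h (Ioo 0 T))
    (hhbd : ∃ B : ℝ, ∀ t ∈ Ioo 0 T, B ≤ h t)
    (φ : ℝ → ℝ)
    (hφcont : ContinuousOn φ (Icc 0 T))
    (hφC2 : ContDiffOn ℝ 2 φ (Ioo 0 T))
    (hφpos : ∀ t ∈ Ioo 0 T, 0 < φ t)
    (hODE : ∀ t ∈ Ioo 0 T,
      deriv (deriv φ) t - m t * deriv φ t + h t * φ t = 0) :
    0 < φ 0 :=
  stmt_1_general T c hT hc m hm A hmA hA h hhbd φ hφcont hφC2 hφpos hODE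
end

section
/- Let b > 0 and β ≥ 1. Suppose v : (0,b) → ℝ is twice differentiable and satisfies v''(t) + (β/t)·v'(t) < 0 for all t ∈ (0,b), and suppose there exists t₀ ∈ (0,b) with v'(t₀) ≥ 0. Then v(t) → -∞ as t → 0⁺. -/
open Set Filter Topology

/-! Since `(t ^ β * v' t)' = t ^ β * (v'' t + β / t * v' t) < 0`, the function `t ^ β * v' t` is
strictly decreasing, so it exceeds some `C > 0` near `0`. For `t ≤ 1` and `β ≥ 1` this gives
`v' t ≥ C / t ^ β ≥ C / t`, hence `v - C log` is monotone near `0` and `v` is bounded above by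
`const + C log t → -∞`. -/

theorem hasDerivAt_rpow_mul {u : ℝ → ℝ} {β t : ℝ} (ht : 0 < t) (hu : DifferentiableAt ℝ u t) :
    HasDerivAt (fun s => s ^ β * u s) (t ^ β * (deriv u t + β / t * u t)) t := by
  refine ((Real.hasDerivAt_rpow_const (Or.inl ht.ne')).mul hu.hasDerivAt).congr_deriv ?_
  rw [Real.rpow_sub ht, Real.rpow_one]
  field_simp
  ring

theorem strictAntiOn_rpow_mul_of_deriv_add_div_mul_neg {u : ℝ → ℝ} {β b : ℝ}
    (hu : ∀ t ∈ Ioo 0 b, DifferentiableAt ℝ u t)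
    (hineq : ∀ t ∈ Ioo 0 b, deriv u t + β / t * u t < 0) :
    StrictAntiOn (fun t => t ^ β * u t) (Ioo 0 b) := by
  have hderiv t (ht : t ∈ Ioo 0 b) := hasDerivAt_rpow_mul (β := β) ht.1 (hu t ht)
  refine strictAntiOn_of_deriv_neg (convex_Ioo 0 b)
    (fun t ht => (hderiv t ht).continuousAt.continuousWithinAt) fun t ht => ?_
  rw [interior_Ioo] at ht
  rw [(hderiv t ht).deriv]
  exact mul_neg_of_pos_of_neg (Real.rpow_pos_of_pos ht.1 β) (hineq t ht)

theorem tendsto_nhdsGT_zero_atBot_of_div_le_deriv {f : ℝ → ℝ} {a C : ℝ} (hC : 0 < C) (ha : 0 < a)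
    (hf : ∀ t ∈ Ioo 0 a, DifferentiableAt ℝ f t)
    (hderiv : ∀ t ∈ Ioo 0 a, C / t ≤ deriv f t) :
    Tendsto f (𝓝[>] 0) atBot := by
  set g : ℝ → ℝ := fun t => f t - C * Real.log t
  have hg t (ht : t ∈ Ioo 0 a) : HasDerivAt g (deriv f t - C * t⁻¹) t :=
    (hf t ht).hasDerivAt.sub ((Real.hasDerivAt_log ht.1.ne').const_mul C)
  have hmono : MonotoneOn g (Ioo 0 a) := by
    refine monotoneOn_of_deriv_nonneg (convex_Ioo 0 a)
      (fun t ht => (hg t ht).continuousAt.continuousWithinAt)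
      (fun t ht => (hg t (by rwa [interior_Ioo] at ht)).differentiableAt.differentiableWithinAt)
      fun t ht => ?_
    rw [interior_Ioo] at ht
    rw [(hg t ht).deriv, ← div_eq_mul_inv, sub_nonneg]
    exact hderiv t ht
  have hs : a / 2 ∈ Ioo (0 : ℝ) a := ⟨half_pos ha, half_lt_self ha⟩
  have hlog : Tendsto (fun t => g (a / 2) + C * Real.log t) (𝓝[>] 0) atBot :=
    tendsto_atBot_add_const_left _ _ (Real.tendsto_log_nhdsGT_zero.const_mul_atBot hC)
  refine tendsto_atBot_mono' _ ?_ hlog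
  filter_upwards [Ioo_mem_nhdsGT hs.1] with t ht
  have := hmono ⟨ht.1, ht.2.trans hs.2⟩ hs ht.2.le
  simp only [g] at this ⊢
  linarith

theorem stmt_4_general (b β : ℝ) (hβ : 1 ≤ β)
    (v : ℝ → ℝ)
    (hv : ∀ t ∈ Ioo 0 b, DifferentiableAt ℝ v t)
    (hv' : ∀ t ∈ Ioo 0 b, DifferentiableAt ℝ (deriv v) t)
    (hineq : ∀ t ∈ Ioo 0 b, deriv (deriv v) t + (β / t) * deriv v t < 0)
    (t₀ : ℝ) (ht₀ : t₀ ∈ Ioo 0 b) (hv't₀ : 0 ≤ deriv v t₀) :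
    Tendsto v (nhdsWithin 0 (Ioi 0)) atBot := by
  set w : ℝ → ℝ := fun t => t ^ β * deriv v t
  have hw : StrictAntiOn w (Ioo 0 b) := strictAntiOn_rpow_mul_of_deriv_add_div_mul_neg hv' hineq
  obtain ⟨ht₀pos, ht₀b⟩ := ht₀
  have ht₁ : t₀ / 2 ∈ Ioo 0 b := ⟨half_pos ht₀pos, by linarith⟩
  have hC : 0 < w (t₀ / 2) :=
    (mul_nonneg (Real.rpow_nonneg ht₀pos.le β) hv't₀).trans_lt (hw ht₁ ⟨ht₀pos, ht₀b⟩ (by linarith))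
  have ha : (0 : ℝ) < min (t₀ / 2) 1 := lt_min ht₁.1 one_pos
  have hsub : Ioo 0 (min (t₀ / 2) 1) ⊆ Ioo 0 b :=
    Ioo_subset_Ioo_right ((min_le_left _ _).trans ht₁.2.le)
  refine tendsto_nhdsGT_zero_atBot_of_div_le_deriv hC ha (fun t ht => hv t (hsub ht)) fun t ht => ?_
  have htβ : 0 < t ^ β := Real.rpow_pos_of_pos ht.1 β
  have hwt : w (t₀ / 2) < w t := hw (hsub ht) ht₁ (ht.2.trans_le (min_le_left _ _))
  calc w (t₀ / 2) / t ≤ w (t₀ / 2) / t ^ β := by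
        refine div_le_div_of_nonneg_left hC.le htβ ?_
        simpa using Real.rpow_le_rpow_of_exponent_ge ht.1 (ht.2.le.trans (min_le_right _ _)) hβ
    _ ≤ deriv v t := by
        rw [div_le_iff₀ htβ, mul_comm]
        exact hwt.le

/-- Auxiliary calculus lemma: if `v'' + (β/t)v' < 0` on `(0,b)` with `β ≥ 1`
and `v' (t₀) ≥ 0` at some `t₀ ∈ (0,b)`, then `v(t) → -∞` as `t → 0⁺`. -/
theorem stmt_4 (b β : ℝ) (hb : 0 < b) (hβ : 1 ≤ β)
    (v : ℝ → ℝ)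
    (hv : ∀ t ∈ Ioo 0 b, DifferentiableAt ℝ v t)
    (hv' : ∀ t ∈ Ioo 0 b, DifferentiableAt ℝ (deriv v) t)
    (hineq : ∀ t ∈ Ioo 0 b, deriv (deriv v) t + (β / t) * deriv v t < 0)
    (t₀ : ℝ) (ht₀ : t₀ ∈ Ioo 0 b) (hv't₀ : 0 ≤ deriv v t₀) :
    Tendsto v (nhdsWithin 0 (Ioi 0)) atBot :=
  stmt_4_general b β hβ v hv hv' hineq t₀ ht₀ hv't₀
end
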